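/- Given a rigged hypersurface with fixed normal form and rigging, the rigged connection ∇̄ preserves the induced volume 3-form η (defined by η_{123} n_α = η_{αβγδ} e_1^β e_2^γ e_3^δ) if and only if the one-form φ vanishes identically, since ∇̄_a η_{bcd} = φ_a η_{bcd}. -/

import Mathlib

noncomputable section

/-- Partial derivative in the `a`-th coordinate direction on `ℝ³`. -/
def pd (f : (Fin 3 → ℝ) → ℝ) (a : Fin 3) (ξ : Fin 3 → ℝ) : ℝ :=
  fderiv ℝ f ξ (Pi.single a 1)

/-- Ambient covariant derivative along `e a` of an ambient vector field along Σ. -/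
def cov (Ch : (Fin 3 → ℝ) → Fin 4 → Fin 4 → Fin 4 → ℝ)
    (e : Fin 3 → (Fin 3 → ℝ) → Fin 4 → ℝ)
    (a : Fin 3) (V : (Fin 3 → ℝ) → Fin 4 → ℝ) (ξ : Fin 3 → ℝ) (μ : Fin 4) : ℝ :=
  pd (fun ζ => V ζ μ) a ξ + ∑ ν, ∑ ρ, Ch ξ μ ν ρ * e a ξ ν * V ξ ρ

/-- Christoffel symbols `Γ̄^c_{ba} = ω^c(∇_{e_a} e_b)` of the rigged connection. -/
def Gbar (Ch : (Fin 3 → ℝ) → Fin 4 → Fin 4 → Fin 4 → ℝ)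
    (e : Fin 3 → (Fin 3 → ℝ) → Fin 4 → ℝ)
    (ω : Fin 3 → (Fin 3 → ℝ) → Fin 4 → ℝ)
    (c b a : Fin 3) (ξ : Fin 3 → ℝ) : ℝ :=
  ∑ μ, ω c ξ μ * cov Ch e a (e b) ξ μ

/-- The one-form `φ_a = n(∇_{e_a} ℓ)`. -/
def phiF (Ch : (Fin 3 → ℝ) → Fin 4 → Fin 4 → Fin 4 → ℝ)
    (e : Fin 3 → (Fin 3 → ℝ) → Fin 4 → ℝ)
    (n ℓ : (Fin 3 → ℝ) → Fin 4 → ℝ) (a : Fin 3) (ξ : Fin 3 → ℝ) : ℝ :=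
  ∑ μ, n ξ μ * cov Ch e a ℓ ξ μ

/-- Rigged covariant derivative `(∇̄_a T)_{bcd}` of a 3-covariant tensor on Σ. -/
def DbarT3 (Cb : (Fin 3 → ℝ) → Fin 3 → Fin 3 → Fin 3 → ℝ)
    (T : (Fin 3 → ℝ) → Fin 3 → Fin 3 → Fin 3 → ℝ)
    (a b c d : Fin 3) (ξ : Fin 3 → ℝ) : ℝ :=
  pd (fun ζ => T ζ b c d) a ξ - (∑ f, Cb ξ f b a * T ξ f c d)
    - (∑ f, Cb ξ f c a * T ξ b f d) - ∑ f, Cb ξ f d a * T ξ b c f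

/-- The alternating Levi-Civita symbol on three indices. -/
def eps (b c d : Fin 3) : ℝ :=
  ((((c.1 : ℤ) - (b.1 : ℤ)) * ((d.1 : ℤ) - (c.1 : ℤ))
    * ((d.1 : ℤ) - (b.1 : ℤ)) : ℤ) : ℝ) / 2

/-- The independent component `η₁₂₃ = η(ℓ, e₁, e₂, e₃)` of the induced volume
form of Σ (with `n(ℓ)=1`). -/
def eta123 (η4 : (Fin 3 → ℝ) → Fin 4 → Fin 4 → Fin 4 → Fin 4 → ℝ)
    (ℓ : (Fin 3 → ℝ) → Fin 4 → ℝ)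
    (e : Fin 3 → (Fin 3 → ℝ) → Fin 4 → ℝ) (ξ : Fin 3 → ℝ) : ℝ :=
  ∑ α, ∑ β, ∑ γ, ∑ δ, η4 ξ α β γ δ * ℓ ξ α * e 0 ξ β * e 1 ξ γ * e 2 ξ δ


lemma pd_mul {f g : (Fin 3 → ℝ) → ℝ} {a : Fin 3} {ξ : Fin 3 → ℝ}
    (hf : DifferentiableAt ℝ f ξ) (hg : DifferentiableAt ℝ g ξ) :
    pd (fun ζ => f ζ * g ζ) a ξ = pd f a ξ * g ξ + f ξ * pd g a ξ := by
  unfold pd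
  rw [fderiv_fun_mul hf hg]
  simp
  ring

lemma pd_sum {ι : Type*} [Fintype ι] {f : ι → (Fin 3 → ℝ) → ℝ} {a : Fin 3} {ξ : Fin 3 → ℝ}
    (hf : ∀ i, DifferentiableAt ℝ (f i) ξ) :
    pd (fun ζ => ∑ i, f i ζ) a ξ = ∑ i, pd (f i) a ξ := by
  unfold pd
  rw [fderiv_fun_sum (fun i _ => hf i)]
  simp

lemma pd_mul5 (f1 f2 f3 f4 f5 : (Fin 3 → ℝ) → ℝ) {a : Fin 3} {ξ : Fin 3 → ℝ}
    (h1 : DifferentiableAt ℝ f1 ξ) (h2 : DifferentiableAt ℝ f2 ξ)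
    (h3 : DifferentiableAt ℝ f3 ξ) (h4 : DifferentiableAt ℝ f4 ξ)
    (h5 : DifferentiableAt ℝ f5 ξ) :
    pd (fun ζ => f1 ζ * f2 ζ * f3 ζ * f4 ζ * f5 ζ) a ξ
      = pd f1 a ξ * f2 ξ * f3 ξ * f4 ξ * f5 ξ
      + f1 ξ * pd f2 a ξ * f3 ξ * f4 ξ * f5 ξ
      + f1 ξ * f2 ξ * pd f3 a ξ * f4 ξ * f5 ξ
      + f1 ξ * f2 ξ * f3 ξ * pd f4 a ξ * f5 ξ
      + f1 ξ * f2 ξ * f3 ξ * f4 ξ * pd f5 a ξ := by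
  have e1 : pd (fun ζ => f1 ζ * f2 ζ * f3 ζ * f4 ζ * f5 ζ) a ξ
      = pd (fun ζ => f1 ζ * f2 ζ * f3 ζ * f4 ζ) a ξ * f5 ξ
        + (f1 ξ * f2 ξ * f3 ξ * f4 ξ) * pd f5 a ξ :=
    pd_mul (((h1.mul h2).mul h3).mul h4) h5
  have e2 : pd (fun ζ => f1 ζ * f2 ζ * f3 ζ * f4 ζ) a ξ
      = pd (fun ζ => f1 ζ * f2 ζ * f3 ζ) a ξ * f4 ξ + (f1 ξ * f2 ξ * f3 ξ) * pd f4 a ξ :=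
    pd_mul ((h1.mul h2).mul h3) h4
  have e3 : pd (fun ζ => f1 ζ * f2 ζ * f3 ζ) a ξ
      = pd (fun ζ => f1 ζ * f2 ζ) a ξ * f3 ξ + (f1 ξ * f2 ξ) * pd f3 a ξ :=
    pd_mul (h1.mul h2) h3
  have e4 : pd (fun ζ => f1 ζ * f2 ζ) a ξ = pd f1 a ξ * f2 ξ + f1 ξ * pd f2 a ξ :=
    pd_mul h1 h2
  rw [e1, e2, e3, e4]
  ring

lemma complete4 (ℓ n : (Fin 3 → ℝ) → Fin 4 → ℝ) (e ω : Fin 3 → (Fin 3 → ℝ) → Fin 4 → ℝ)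
    (ξ : Fin 3 → ℝ)
    (hcomp : ∀ μ ν, ℓ ξ μ * n ξ ν + ∑ a, e a ξ μ * ω a ξ ν = if μ = ν then (1 : ℝ) else 0)
    (V : Fin 4 → ℝ) :
    V = fun μ => (∑ ν, n ξ ν * V ν) * ℓ ξ μ + (∑ ν, ω 0 ξ ν * V ν) * e 0 ξ μ
      + (∑ ν, ω 1 ξ ν * V ν) * e 1 ξ μ + (∑ ν, ω 2 ξ ν * V ν) * e 2 ξ μ := by
  funext μ
  have h0 : V μ = ∑ ν, (if μ = ν then (1 : ℝ) else 0) * V ν := by simp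
  rw [h0]
  calc ∑ ν, (if μ = ν then (1 : ℝ) else 0) * V ν
      = ∑ ν, (ℓ ξ μ * n ξ ν + ∑ a, e a ξ μ * ω a ξ ν) * V ν := by
        refine Finset.sum_congr rfl fun ν _ => ?_
        rw [hcomp]
    _ = ∑ ν, (ℓ ξ μ * (n ξ ν * V ν) + (e 0 ξ μ * (ω 0 ξ ν * V ν)
          + (e 1 ξ μ * (ω 1 ξ ν * V ν) + e 2 ξ μ * (ω 2 ξ ν * V ν)))) := by
        refine Finset.sum_congr rfl fun ν _ => ?_
        rw [Fin.sum_univ_three]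
        ring
    _ = ℓ ξ μ * (∑ ν, n ξ ν * V ν) + (e 0 ξ μ * (∑ ν, ω 0 ξ ν * V ν)
          + (e 1 ξ μ * (∑ ν, ω 1 ξ ν * V ν) + e 2 ξ μ * (∑ ν, ω 2 ξ ν * V ν))) := by
        simp [Finset.sum_add_distrib, Finset.mul_sum]
    _ = _ := by ring

lemma covM (Ch : (Fin 3 → ℝ) → Fin 4 → Fin 4 → Fin 4 → ℝ)
    (e : Fin 3 → (Fin 3 → ℝ) → Fin 4 → ℝ) (a : Fin 3)
    (V : (Fin 3 → ℝ) → Fin 4 → ℝ) (ξ : Fin 3 → ℝ) (μ : Fin 4)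
    (hChsym : ∀ α β γ, Ch ξ α β γ = Ch ξ α γ β) :
    cov Ch e a V ξ μ = pd (fun ζ => V ζ μ) a ξ
      + ∑ ρ, (∑ σ, Ch ξ μ ρ σ * e a ξ σ) * V ξ ρ := by
  unfold cov
  congr 1
  calc ∑ ν, ∑ ρ, Ch ξ μ ν ρ * e a ξ ν * V ξ ρ
      = ∑ ν, ∑ ρ, Ch ξ μ ρ ν * e a ξ ν * V ξ ρ :=
        Finset.sum_congr rfl fun ν _ => Finset.sum_congr rfl fun ρ _ => by rw [hChsym]
    _ = ∑ ρ, ∑ ν, Ch ξ μ ρ ν * e a ξ ν * V ξ ρ := Finset.sum_comm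
    _ = ∑ ρ, (∑ σ, Ch ξ μ ρ σ * e a ξ σ) * V ξ ρ :=
        Finset.sum_congr rfl fun ρ _ => by rw [Finset.sum_mul]

lemma pd_mul_const {f : (Fin 3 → ℝ) → ℝ} {k : ℝ} {a : Fin 3} {ξ : Fin 3 → ℝ}
    (hf : DifferentiableAt ℝ f ξ) :
    pd (fun ζ => f ζ * k) a ξ = pd f a ξ * k := by
  unfold pd
  rw [fderiv_mul_const hf]
  simp [mul_comm]

def S4 (f : Fin 4 → Fin 4 → Fin 4 → Fin 4 → ℝ) : ℝ := ∑ α, ∑ β, ∑ γ, ∑ δ, f α β γ δ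
def S5 (f : Fin 4 → Fin 4 → Fin 4 → Fin 4 → Fin 4 → ℝ) : ℝ :=
  ∑ α, ∑ β, ∑ γ, ∑ δ, ∑ ρ, f α β γ δ ρ
lemma sum4_perm12 (f : Fin 4 → Fin 4 → Fin 4 → Fin 4 → ℝ) :
    S4 (fun a b c d => f b a c d) = S4 f := by
  have h := Equiv.sum_comp (Function.Involutive.toPerm
    (fun p : Fin 4 × Fin 4 × Fin 4 × Fin 4 => (p.2.1, p.1, p.2.2.1, p.2.2.2))
    (fun p => rfl)) (fun p : Fin 4 × Fin 4 × Fin 4 × Fin 4 => f p.1 p.2.1 p.2.2.1 p.2.2.2)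
  unfold S4
  simpa [Fintype.sum_prod_type, Function.Involutive.coe_toPerm, Function.Involutive.toPerm] using h

lemma sum4_perm13 (f : Fin 4 → Fin 4 → Fin 4 → Fin 4 → ℝ) :
    S4 (fun a b c d => f c b a d) = S4 f := by
  have h := Equiv.sum_comp (Function.Involutive.toPerm
    (fun p : Fin 4 × Fin 4 × Fin 4 × Fin 4 => (p.2.2.1, p.2.1, p.1, p.2.2.2))
    (fun p => rfl)) (fun p : Fin 4 × Fin 4 × Fin 4 × Fin 4 => f p.1 p.2.1 p.2.2.1 p.2.2.2)
  unfold S4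
  simpa [Fintype.sum_prod_type, Function.Involutive.coe_toPerm, Function.Involutive.toPerm] using h

lemma sum4_perm14 (f : Fin 4 → Fin 4 → Fin 4 → Fin 4 → ℝ) :
    S4 (fun a b c d => f d b c a) = S4 f := by
  have h := Equiv.sum_comp (Function.Involutive.toPerm
    (fun p : Fin 4 × Fin 4 × Fin 4 × Fin 4 => (p.2.2.2, p.2.1, p.2.2.1, p.1))
    (fun p => rfl)) (fun p : Fin 4 × Fin 4 × Fin 4 × Fin 4 => f p.1 p.2.1 p.2.2.1 p.2.2.2)
  unfold S4
  simpa [Fintype.sum_prod_type, Function.Involutive.coe_toPerm, Function.Involutive.toPerm] using h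

lemma sum4_perm23 (f : Fin 4 → Fin 4 → Fin 4 → Fin 4 → ℝ) :
    S4 (fun a b c d => f a c b d) = S4 f := by
  have h := Equiv.sum_comp (Function.Involutive.toPerm
    (fun p : Fin 4 × Fin 4 × Fin 4 × Fin 4 => (p.1, p.2.2.1, p.2.1, p.2.2.2))
    (fun p => rfl)) (fun p : Fin 4 × Fin 4 × Fin 4 × Fin 4 => f p.1 p.2.1 p.2.2.1 p.2.2.2)
  unfold S4
  simpa [Fintype.sum_prod_type, Function.Involutive.coe_toPerm, Function.Involutive.toPerm] using h

lemma sum4_perm24 (f : Fin 4 → Fin 4 → Fin 4 → Fin 4 → ℝ) :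
    S4 (fun a b c d => f a d c b) = S4 f := by
  have h := Equiv.sum_comp (Function.Involutive.toPerm
    (fun p : Fin 4 × Fin 4 × Fin 4 × Fin 4 => (p.1, p.2.2.2, p.2.2.1, p.2.1))
    (fun p => rfl)) (fun p : Fin 4 × Fin 4 × Fin 4 × Fin 4 => f p.1 p.2.1 p.2.2.1 p.2.2.2)
  unfold S4
  simpa [Fintype.sum_prod_type, Function.Involutive.coe_toPerm, Function.Involutive.toPerm] using h

lemma sum4_perm34 (f : Fin 4 → Fin 4 → Fin 4 → Fin 4 → ℝ) :
    S4 (fun a b c d => f a b d c) = S4 f := by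
  have h := Equiv.sum_comp (Function.Involutive.toPerm
    (fun p : Fin 4 × Fin 4 × Fin 4 × Fin 4 => (p.1, p.2.1, p.2.2.2, p.2.2.1))
    (fun p => rfl)) (fun p : Fin 4 × Fin 4 × Fin 4 × Fin 4 => f p.1 p.2.1 p.2.2.1 p.2.2.2)
  unfold S4
  simpa [Fintype.sum_prod_type, Function.Involutive.coe_toPerm, Function.Involutive.toPerm] using h

lemma sum5_perm15 (f : Fin 4 → Fin 4 → Fin 4 → Fin 4 → Fin 4 → ℝ) :
    S5 (fun a b c d e => f e b c d a) = S5 f := by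
  have h := Equiv.sum_comp (Function.Involutive.toPerm
    (fun p : Fin 4 × Fin 4 × Fin 4 × Fin 4 × Fin 4 => (p.2.2.2.2, p.2.1, p.2.2.1, p.2.2.2.1, p.1))
    (fun p => rfl)) (fun p : Fin 4 × Fin 4 × Fin 4 × Fin 4 × Fin 4 => f p.1 p.2.1 p.2.2.1 p.2.2.2.1 p.2.2.2.2)
  unfold S5
  simpa [Fintype.sum_prod_type, Function.Involutive.coe_toPerm, Function.Involutive.toPerm] using h

lemma sum5_perm25 (f : Fin 4 → Fin 4 → Fin 4 → Fin 4 → Fin 4 → ℝ) :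
    S5 (fun a b c d e => f a e c d b) = S5 f := by
  have h := Equiv.sum_comp (Function.Involutive.toPerm
    (fun p : Fin 4 × Fin 4 × Fin 4 × Fin 4 × Fin 4 => (p.1, p.2.2.2.2, p.2.2.1, p.2.2.2.1, p.2.1))
    (fun p => rfl)) (fun p : Fin 4 × Fin 4 × Fin 4 × Fin 4 × Fin 4 => f p.1 p.2.1 p.2.2.1 p.2.2.2.1 p.2.2.2.2)
  unfold S5
  simpa [Fintype.sum_prod_type, Function.Involutive.coe_toPerm, Function.Involutive.toPerm] using h

lemma sum5_perm35 (f : Fin 4 → Fin 4 → Fin 4 → Fin 4 → Fin 4 → ℝ) :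
    S5 (fun a b c d e => f a b e d c) = S5 f := by
  have h := Equiv.sum_comp (Function.Involutive.toPerm
    (fun p : Fin 4 × Fin 4 × Fin 4 × Fin 4 × Fin 4 => (p.1, p.2.1, p.2.2.2.2, p.2.2.2.1, p.2.2.1))
    (fun p => rfl)) (fun p : Fin 4 × Fin 4 × Fin 4 × Fin 4 × Fin 4 => f p.1 p.2.1 p.2.2.1 p.2.2.2.1 p.2.2.2.2)
  unfold S5
  simpa [Fintype.sum_prod_type, Function.Involutive.coe_toPerm, Function.Involutive.toPerm] using h

lemma sum5_perm45 (f : Fin 4 → Fin 4 → Fin 4 → Fin 4 → Fin 4 → ℝ) :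
    S5 (fun a b c d e => f a b c e d) = S5 f := by
  have h := Equiv.sum_comp (Function.Involutive.toPerm
    (fun p : Fin 4 × Fin 4 × Fin 4 × Fin 4 × Fin 4 => (p.1, p.2.1, p.2.2.1, p.2.2.2.2, p.2.2.2.1))
    (fun p => rfl)) (fun p : Fin 4 × Fin 4 × Fin 4 × Fin 4 × Fin 4 => f p.1 p.2.1 p.2.2.1 p.2.2.2.1 p.2.2.2.2)
  unfold S5
  simpa [Fintype.sum_prod_type, Function.Involutive.coe_toPerm, Function.Involutive.toPerm] using h

lemma sum4_add (f g : Fin 4 → Fin 4 → Fin 4 → Fin 4 → ℝ) :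
    S4 (fun a b c d => f a b c d + g a b c d) = S4 f + S4 g := by
  unfold S4; simp [Finset.sum_add_distrib]

lemma sum4_smul (r : ℝ) (f : Fin 4 → Fin 4 → Fin 4 → Fin 4 → ℝ) :
    S4 (fun a b c d => r * f a b c d) = r * S4 f := by
  unfold S4; simp [Finset.mul_sum]

lemma sum4_congr (f g : Fin 4 → Fin 4 → Fin 4 → Fin 4 → ℝ)
    (h : ∀ α β γ δ, f α β γ δ = g α β γ δ) : S4 f = S4 g := by
  unfold S4
  exact Finset.sum_congr rfl fun α _ => Finset.sum_congr rfl fun β _ =>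
    Finset.sum_congr rfl fun γ _ => Finset.sum_congr rfl fun δ _ => h α β γ δ
def QQ (H : Fin 4 → Fin 4 → Fin 4 → Fin 4 → ℝ) (u v w x : Fin 4 → ℝ) : ℝ :=
  S4 (fun α β γ δ => H α β γ δ * u α * v β * w γ * x δ)

lemma sum5_congr (f g : Fin 4 → Fin 4 → Fin 4 → Fin 4 → Fin 4 → ℝ)
    (h : ∀ α β γ δ ρ, f α β γ δ ρ = g α β γ δ ρ) : S5 f = S5 g := by
  unfold S5
  exact Finset.sum_congr rfl fun α _ => Finset.sum_congr rfl fun β _ =>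
    Finset.sum_congr rfl fun γ _ => Finset.sum_congr rfl fun δ _ =>
    Finset.sum_congr rfl fun ρ _ => h α β γ δ ρ

lemma Qalt12 (H : Fin 4 → Fin 4 → Fin 4 → Fin 4 → ℝ)
    (h : ∀ α β γ δ, H β α γ δ = -H α β γ δ) (u v w : Fin 4 → ℝ) :
    QQ H u u v w = 0 := by
  have key : QQ H u u v w = - QQ H u u v w := by
    calc QQ H u u v w
        = S4 (fun α β γ δ => -(H β α γ δ * u β * u α * v γ * w δ)) :=
          sum4_congr _ _ fun α β γ δ => by rw [h]; ring
      _ = - S4 (fun α β γ δ => H β α γ δ * u β * u α * v γ * w δ) := by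
          unfold S4; simp
      _ = - QQ H u u v w :=
          congrArg Neg.neg (sum4_perm12 (fun α β γ δ => H α β γ δ * u α * u β * v γ * w δ))
  linarith

lemma Qalt13 (H : Fin 4 → Fin 4 → Fin 4 → Fin 4 → ℝ)
    (h : ∀ α β γ δ, H γ β α δ = -H α β γ δ) (u v w : Fin 4 → ℝ) :
    QQ H u v u w = 0 := by
  have key : QQ H u v u w = - QQ H u v u w := by
    calc QQ H u v u w
        = S4 (fun α β γ δ => -(H γ β α δ * u γ * v β * u α * w δ)) :=
          sum4_congr _ _ fun α β γ δ => by rw [h]; ring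
      _ = - S4 (fun α β γ δ => H γ β α δ * u γ * v β * u α * w δ) := by
          unfold S4; simp
      _ = - QQ H u v u w :=
          congrArg Neg.neg (sum4_perm13 (fun α β γ δ => H α β γ δ * u α * v β * u γ * w δ))
  linarith

lemma Qalt14 (H : Fin 4 → Fin 4 → Fin 4 → Fin 4 → ℝ)
    (h : ∀ α β γ δ, H δ β γ α = -H α β γ δ) (u v w : Fin 4 → ℝ) :
    QQ H u v w u = 0 := by
  have key : QQ H u v w u = - QQ H u v w u := by
    calc QQ H u v w u
        = S4 (fun α β γ δ => -(H δ β γ α * u δ * v β * w γ * u α)) :=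
          sum4_congr _ _ fun α β γ δ => by rw [h]; ring
      _ = - S4 (fun α β γ δ => H δ β γ α * u δ * v β * w γ * u α) := by
          unfold S4; simp
      _ = - QQ H u v w u :=
          congrArg Neg.neg (sum4_perm14 (fun α β γ δ => H α β γ δ * u α * v β * w γ * u δ))
  linarith

lemma Qalt23 (H : Fin 4 → Fin 4 → Fin 4 → Fin 4 → ℝ)
    (h : ∀ α β γ δ, H α γ β δ = -H α β γ δ) (u v w : Fin 4 → ℝ) :
    QQ H v u u w = 0 := by
  have key : QQ H v u u w = - QQ H v u u w := by
    calc QQ H v u u w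
        = S4 (fun α β γ δ => -(H α γ β δ * v α * u γ * u β * w δ)) :=
          sum4_congr _ _ fun α β γ δ => by rw [h]; ring
      _ = - S4 (fun α β γ δ => H α γ β δ * v α * u γ * u β * w δ) := by
          unfold S4; simp
      _ = - QQ H v u u w :=
          congrArg Neg.neg (sum4_perm23 (fun α β γ δ => H α β γ δ * v α * u β * u γ * w δ))
  linarith

lemma Qalt24 (H : Fin 4 → Fin 4 → Fin 4 → Fin 4 → ℝ)
    (h : ∀ α β γ δ, H α δ γ β = -H α β γ δ) (u v w : Fin 4 → ℝ) :
    QQ H v u w u = 0 := by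
  have key : QQ H v u w u = - QQ H v u w u := by
    calc QQ H v u w u
        = S4 (fun α β γ δ => -(H α δ γ β * v α * u δ * w γ * u β)) :=
          sum4_congr _ _ fun α β γ δ => by rw [h]; ring
      _ = - S4 (fun α β γ δ => H α δ γ β * v α * u δ * w γ * u β) := by
          unfold S4; simp
      _ = - QQ H v u w u :=
          congrArg Neg.neg (sum4_perm24 (fun α β γ δ => H α β γ δ * v α * u β * w γ * u δ))
  linarith

lemma Qalt34 (H : Fin 4 → Fin 4 → Fin 4 → Fin 4 → ℝ)
    (h : ∀ α β γ δ, H α β δ γ = -H α β γ δ) (u v w : Fin 4 → ℝ) :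
    QQ H v w u u = 0 := by
  have key : QQ H v w u u = - QQ H v w u u := by
    calc QQ H v w u u
        = S4 (fun α β γ δ => -(H α β δ γ * v α * w β * u δ * u γ)) :=
          sum4_congr _ _ fun α β γ δ => by rw [h]; ring
      _ = - S4 (fun α β γ δ => H α β δ γ * v α * w β * u δ * u γ) := by
          unfold S4; simp
      _ = - QQ H v w u u :=
          congrArg Neg.neg (sum4_perm34 (fun α β γ δ => H α β γ δ * v α * w β * u γ * u δ))
  linarith

lemma transfer1 (H : Fin 4 → Fin 4 → Fin 4 → Fin 4 → ℝ) (M : Fin 4 → Fin 4 → ℝ) (u v w x : Fin 4 → ℝ) :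
    S4 (fun α β γ δ => (∑ ρ, M ρ α * H ρ β γ δ) * u α * v β * w γ * x δ) = QQ H (fun μ => ∑ ρ, M μ ρ * u ρ) v w x := by
  have hR : QQ H (fun μ => ∑ ρ, M μ ρ * u ρ) v w x = S5 (fun α β γ δ ρ => H α β γ δ * (M α ρ * u ρ) * v β * w γ * x δ) :=
    sum4_congr _ _ fun α β γ δ => by rw [Finset.mul_sum, Finset.sum_mul, Finset.sum_mul, Finset.sum_mul]
  calc S4 (fun α β γ δ => (∑ ρ, M ρ α * H ρ β γ δ) * u α * v β * w γ * x δ)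
      = S5 (fun α β γ δ ρ => M ρ α * H ρ β γ δ * u α * v β * w γ * x δ) :=
        sum4_congr _ _ fun α β γ δ => by
          rw [Finset.sum_mul, Finset.sum_mul, Finset.sum_mul, Finset.sum_mul]
    _ = S5 (fun α β γ δ ρ => H ρ β γ δ * (M ρ α * u α) * v β * w γ * x δ) :=
        sum5_congr _ _ fun α β γ δ ρ => by ring
    _ = S5 (fun α β γ δ ρ => H α β γ δ * (M α ρ * u ρ) * v β * w γ * x δ) :=
        sum5_perm15 (fun α β γ δ ρ => H α β γ δ * (M α ρ * u ρ) * v β * w γ * x δ)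
    _ = QQ H (fun μ => ∑ ρ, M μ ρ * u ρ) v w x := hR.symm

lemma transfer2 (H : Fin 4 → Fin 4 → Fin 4 → Fin 4 → ℝ) (M : Fin 4 → Fin 4 → ℝ) (u v w x : Fin 4 → ℝ) :
    S4 (fun α β γ δ => (∑ ρ, M ρ β * H α ρ γ δ) * u α * v β * w γ * x δ) = QQ H u (fun μ => ∑ ρ, M μ ρ * v ρ) w x := by
  have hR : QQ H u (fun μ => ∑ ρ, M μ ρ * v ρ) w x = S5 (fun α β γ δ ρ => H α β γ δ * u α * (M β ρ * v ρ) * w γ * x δ) :=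
    sum4_congr _ _ fun α β γ δ => by rw [Finset.mul_sum, Finset.sum_mul, Finset.sum_mul]
  calc S4 (fun α β γ δ => (∑ ρ, M ρ β * H α ρ γ δ) * u α * v β * w γ * x δ)
      = S5 (fun α β γ δ ρ => M ρ β * H α ρ γ δ * u α * v β * w γ * x δ) :=
        sum4_congr _ _ fun α β γ δ => by
          rw [Finset.sum_mul, Finset.sum_mul, Finset.sum_mul, Finset.sum_mul]
    _ = S5 (fun α β γ δ ρ => H α ρ γ δ * u α * (M ρ β * v β) * w γ * x δ) :=
        sum5_congr _ _ fun α β γ δ ρ => by ring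
    _ = S5 (fun α β γ δ ρ => H α β γ δ * u α * (M β ρ * v ρ) * w γ * x δ) :=
        sum5_perm25 (fun α β γ δ ρ => H α β γ δ * u α * (M β ρ * v ρ) * w γ * x δ)
    _ = QQ H u (fun μ => ∑ ρ, M μ ρ * v ρ) w x := hR.symm

lemma transfer3 (H : Fin 4 → Fin 4 → Fin 4 → Fin 4 → ℝ) (M : Fin 4 → Fin 4 → ℝ) (u v w x : Fin 4 → ℝ) :
    S4 (fun α β γ δ => (∑ ρ, M ρ γ * H α β ρ δ) * u α * v β * w γ * x δ) = QQ H u v (fun μ => ∑ ρ, M μ ρ * w ρ) x := by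
  have hR : QQ H u v (fun μ => ∑ ρ, M μ ρ * w ρ) x = S5 (fun α β γ δ ρ => H α β γ δ * u α * v β * (M γ ρ * w ρ) * x δ) :=
    sum4_congr _ _ fun α β γ δ => by rw [Finset.mul_sum, Finset.sum_mul]
  calc S4 (fun α β γ δ => (∑ ρ, M ρ γ * H α β ρ δ) * u α * v β * w γ * x δ)
      = S5 (fun α β γ δ ρ => M ρ γ * H α β ρ δ * u α * v β * w γ * x δ) :=
        sum4_congr _ _ fun α β γ δ => by
          rw [Finset.sum_mul, Finset.sum_mul, Finset.sum_mul, Finset.sum_mul]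
    _ = S5 (fun α β γ δ ρ => H α β ρ δ * u α * v β * (M ρ γ * w γ) * x δ) :=
        sum5_congr _ _ fun α β γ δ ρ => by ring
    _ = S5 (fun α β γ δ ρ => H α β γ δ * u α * v β * (M γ ρ * w ρ) * x δ) :=
        sum5_perm35 (fun α β γ δ ρ => H α β γ δ * u α * v β * (M γ ρ * w ρ) * x δ)
    _ = QQ H u v (fun μ => ∑ ρ, M μ ρ * w ρ) x := hR.symm

lemma transfer4 (H : Fin 4 → Fin 4 → Fin 4 → Fin 4 → ℝ) (M : Fin 4 → Fin 4 → ℝ) (u v w x : Fin 4 → ℝ) :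
    S4 (fun α β γ δ => (∑ ρ, M ρ δ * H α β γ ρ) * u α * v β * w γ * x δ) = QQ H u v w (fun μ => ∑ ρ, M μ ρ * x ρ) := by
  have hR : QQ H u v w (fun μ => ∑ ρ, M μ ρ * x ρ) = S5 (fun α β γ δ ρ => H α β γ δ * u α * v β * w γ * (M δ ρ * x ρ)) :=
    sum4_congr _ _ fun α β γ δ => by rw [Finset.mul_sum]
  calc S4 (fun α β γ δ => (∑ ρ, M ρ δ * H α β γ ρ) * u α * v β * w γ * x δ)
      = S5 (fun α β γ δ ρ => M ρ δ * H α β γ ρ * u α * v β * w γ * x δ) :=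
        sum4_congr _ _ fun α β γ δ => by
          rw [Finset.sum_mul, Finset.sum_mul, Finset.sum_mul, Finset.sum_mul]
    _ = S5 (fun α β γ δ ρ => H α β γ ρ * u α * v β * w γ * (M ρ δ * x δ)) :=
        sum5_congr _ _ fun α β γ δ ρ => by ring
    _ = S5 (fun α β γ δ ρ => H α β γ δ * u α * v β * w γ * (M δ ρ * x ρ)) :=
        sum5_perm45 (fun α β γ δ ρ => H α β γ δ * u α * v β * w γ * (M δ ρ * x ρ))
    _ = QQ H u v w (fun μ => ∑ ρ, M μ ρ * x ρ) := hR.symm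

lemma Qlin1 (H : Fin 4 → Fin 4 → Fin 4 → Fin 4 → ℝ) (u0 u1 u2 u3 v w x : Fin 4 → ℝ) (r s0 s1 s2 : ℝ) :
    QQ H (fun μ => r * u0 μ + s0 * u1 μ + s1 * u2 μ + s2 * u3 μ) v w x = r * QQ H u0 v w x + s0 * QQ H u1 v w x + s1 * QQ H u2 v w x + s2 * QQ H u3 v w x := by
  calc QQ H (fun μ => r * u0 μ + s0 * u1 μ + s1 * u2 μ + s2 * u3 μ) v w x
      = S4 (fun α β γ δ => r * (H α β γ δ * u0 α * v β * w γ * x δ) + (s0 * (H α β γ δ * u1 α * v β * w γ * x δ) + (s1 * (H α β γ δ * u2 α * v β * w γ * x δ) + s2 * (H α β γ δ * u3 α * v β * w γ * x δ)))) :=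
        sum4_congr _ _ fun α β γ δ => by ring
    _ = r * QQ H u0 v w x + s0 * QQ H u1 v w x + s1 * QQ H u2 v w x + s2 * QQ H u3 v w x := by
        rw [sum4_add, sum4_add, sum4_add, sum4_smul, sum4_smul, sum4_smul, sum4_smul]
        unfold QQ
        ring

lemma Qlin2 (H : Fin 4 → Fin 4 → Fin 4 → Fin 4 → ℝ) (u0 u1 u2 u3 u w x : Fin 4 → ℝ) (r s0 s1 s2 : ℝ) :
    QQ H u (fun μ => r * u0 μ + s0 * u1 μ + s1 * u2 μ + s2 * u3 μ) w x = r * QQ H u u0 w x + s0 * QQ H u u1 w x + s1 * QQ H u u2 w x + s2 * QQ H u u3 w x := by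
  calc QQ H u (fun μ => r * u0 μ + s0 * u1 μ + s1 * u2 μ + s2 * u3 μ) w x
      = S4 (fun α β γ δ => r * (H α β γ δ * u α * u0 β * w γ * x δ) + (s0 * (H α β γ δ * u α * u1 β * w γ * x δ) + (s1 * (H α β γ δ * u α * u2 β * w γ * x δ) + s2 * (H α β γ δ * u α * u3 β * w γ * x δ)))) :=
        sum4_congr _ _ fun α β γ δ => by ring
    _ = r * QQ H u u0 w x + s0 * QQ H u u1 w x + s1 * QQ H u u2 w x + s2 * QQ H u u3 w x := by
        rw [sum4_add, sum4_add, sum4_add, sum4_smul, sum4_smul, sum4_smul, sum4_smul]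
        unfold QQ
        ring

lemma Qlin3 (H : Fin 4 → Fin 4 → Fin 4 → Fin 4 → ℝ) (u0 u1 u2 u3 u v x : Fin 4 → ℝ) (r s0 s1 s2 : ℝ) :
    QQ H u v (fun μ => r * u0 μ + s0 * u1 μ + s1 * u2 μ + s2 * u3 μ) x = r * QQ H u v u0 x + s0 * QQ H u v u1 x + s1 * QQ H u v u2 x + s2 * QQ H u v u3 x := by
  calc QQ H u v (fun μ => r * u0 μ + s0 * u1 μ + s1 * u2 μ + s2 * u3 μ) x
      = S4 (fun α β γ δ => r * (H α β γ δ * u α * v β * u0 γ * x δ) + (s0 * (H α β γ δ * u α * v β * u1 γ * x δ) + (s1 * (H α β γ δ * u α * v β * u2 γ * x δ) + s2 * (H α β γ δ * u α * v β * u3 γ * x δ)))) :=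
        sum4_congr _ _ fun α β γ δ => by ring
    _ = r * QQ H u v u0 x + s0 * QQ H u v u1 x + s1 * QQ H u v u2 x + s2 * QQ H u v u3 x := by
        rw [sum4_add, sum4_add, sum4_add, sum4_smul, sum4_smul, sum4_smul, sum4_smul]
        unfold QQ
        ring

lemma Qlin4 (H : Fin 4 → Fin 4 → Fin 4 → Fin 4 → ℝ) (u0 u1 u2 u3 u v w : Fin 4 → ℝ) (r s0 s1 s2 : ℝ) :
    QQ H u v w (fun μ => r * u0 μ + s0 * u1 μ + s1 * u2 μ + s2 * u3 μ) = r * QQ H u v w u0 + s0 * QQ H u v w u1 + s1 * QQ H u v w u2 + s2 * QQ H u v w u3 := by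
  calc QQ H u v w (fun μ => r * u0 μ + s0 * u1 μ + s1 * u2 μ + s2 * u3 μ)
      = S4 (fun α β γ δ => r * (H α β γ δ * u α * v β * w γ * u0 δ) + (s0 * (H α β γ δ * u α * v β * w γ * u1 δ) + (s1 * (H α β γ δ * u α * v β * w γ * u2 δ) + s2 * (H α β γ δ * u α * v β * w γ * u3 δ)))) :=
        sum4_congr _ _ fun α β γ δ => by ring
    _ = r * QQ H u v w u0 + s0 * QQ H u v w u1 + s1 * QQ H u v w u2 + s2 * QQ H u v w u3 := by
        rw [sum4_add, sum4_add, sum4_add, sum4_smul, sum4_smul, sum4_smul, sum4_smul]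
        unfold QQ
        ring

lemma Qadd1 (H : Fin 4 → Fin 4 → Fin 4 → Fin 4 → ℝ) (u0 u1 v w x : Fin 4 → ℝ) :
    QQ H (fun μ => u0 μ + u1 μ) v w x = QQ H u0 v w x + QQ H u1 v w x := by
  calc QQ H (fun μ => u0 μ + u1 μ) v w x
      = S4 (fun α β γ δ => H α β γ δ * u0 α * v β * w γ * x δ + H α β γ δ * u1 α * v β * w γ * x δ) :=
        sum4_congr _ _ fun α β γ δ => by ring
    _ = _ := by rw [sum4_add]; rfl

lemma Qadd2 (H : Fin 4 → Fin 4 → Fin 4 → Fin 4 → ℝ) (u0 u1 u w x : Fin 4 → ℝ) :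
    QQ H u (fun μ => u0 μ + u1 μ) w x = QQ H u u0 w x + QQ H u u1 w x := by
  calc QQ H u (fun μ => u0 μ + u1 μ) w x
      = S4 (fun α β γ δ => H α β γ δ * u α * u0 β * w γ * x δ + H α β γ δ * u α * u1 β * w γ * x δ) :=
        sum4_congr _ _ fun α β γ δ => by ring
    _ = _ := by rw [sum4_add]; rfl

lemma Qadd3 (H : Fin 4 → Fin 4 → Fin 4 → Fin 4 → ℝ) (u0 u1 u v x : Fin 4 → ℝ) :
    QQ H u v (fun μ => u0 μ + u1 μ) x = QQ H u v u0 x + QQ H u v u1 x := by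
  calc QQ H u v (fun μ => u0 μ + u1 μ) x
      = S4 (fun α β γ δ => H α β γ δ * u α * v β * u0 γ * x δ + H α β γ δ * u α * v β * u1 γ * x δ) :=
        sum4_congr _ _ fun α β γ δ => by ring
    _ = _ := by rw [sum4_add]; rfl

lemma Qadd4 (H : Fin 4 → Fin 4 → Fin 4 → Fin 4 → ℝ) (u0 u1 u v w : Fin 4 → ℝ) :
    QQ H u v w (fun μ => u0 μ + u1 μ) = QQ H u v w u0 + QQ H u v w u1 := by
  calc QQ H u v w (fun μ => u0 μ + u1 μ)
      = S4 (fun α β γ δ => H α β γ δ * u α * v β * w γ * u0 δ + H α β γ δ * u α * v β * w γ * u1 δ) :=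
        sum4_congr _ _ fun α β γ δ => by ring
    _ = _ := by rw [sum4_add]; rfl

lemma pd_sum4 (F : Fin 4 → Fin 4 → Fin 4 → Fin 4 → (Fin 3 → ℝ) → ℝ)
    (hF : ∀ α β γ δ, Differentiable ℝ (F α β γ δ)) (a : Fin 3) (ξ : Fin 3 → ℝ) :
    pd (fun ζ => ∑ α, ∑ β, ∑ γ, ∑ δ, F α β γ δ ζ) a ξ
      = S4 (fun α β γ δ => pd (F α β γ δ) a ξ) := by
  have d1 : ∀ α β γ, Differentiable ℝ (fun ζ => ∑ δ, F α β γ δ ζ) :=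
    fun α β γ => Differentiable.fun_sum fun δ _ => hF α β γ δ
  have d2 : ∀ α β, Differentiable ℝ (fun ζ => ∑ γ, ∑ δ, F α β γ δ ζ) :=
    fun α β => Differentiable.fun_sum fun γ _ => d1 α β γ
  have d3 : ∀ α, Differentiable ℝ (fun ζ => ∑ β, ∑ γ, ∑ δ, F α β γ δ ζ) :=
    fun α => Differentiable.fun_sum fun β _ => d2 α β
  unfold S4
  calc pd (fun ζ => ∑ α, ∑ β, ∑ γ, ∑ δ, F α β γ δ ζ) a ξ
      = ∑ α, pd (fun ζ => ∑ β, ∑ γ, ∑ δ, F α β γ δ ζ) a ξ :=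
        pd_sum fun α => (d3 α).differentiableAt
    _ = ∑ α, ∑ β, ∑ γ, ∑ δ, pd (F α β γ δ) a ξ := by
        refine Finset.sum_congr rfl fun α _ => ?_
        calc pd (fun ζ => ∑ β, ∑ γ, ∑ δ, F α β γ δ ζ) a ξ
            = ∑ β, pd (fun ζ => ∑ γ, ∑ δ, F α β γ δ ζ) a ξ :=
              pd_sum fun β => (d2 α β).differentiableAt
          _ = ∑ β, ∑ γ, ∑ δ, pd (F α β γ δ) a ξ := by
              refine Finset.sum_congr rfl fun β _ => ?_
              calc pd (fun ζ => ∑ γ, ∑ δ, F α β γ δ ζ) a ξ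
                  = ∑ γ, pd (fun ζ => ∑ δ, F α β γ δ ζ) a ξ :=
                    pd_sum fun γ => (d1 α β γ).differentiableAt
                _ = ∑ γ, ∑ δ, pd (F α β γ δ) a ξ := by
                    refine Finset.sum_congr rfl fun γ _ => ?_
                    exact pd_sum fun δ => (hF α β γ δ).differentiableAt

lemma etaKey
    (Ch : (Fin 3 → ℝ) → Fin 4 → Fin 4 → Fin 4 → ℝ)
    (e : Fin 3 → (Fin 3 → ℝ) → Fin 4 → ℝ)
    (ℓ n : (Fin 3 → ℝ) → Fin 4 → ℝ)
    (ω : Fin 3 → (Fin 3 → ℝ) → Fin 4 → ℝ)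
    (η4 : (Fin 3 → ℝ) → Fin 4 → Fin 4 → Fin 4 → Fin 4 → ℝ)
    (hChsym : ∀ ξ α β γ, Ch ξ α β γ = Ch ξ α γ β)
    (he : ∀ a μ, ContDiff ℝ (⊤ : ℕ∞) (fun ζ => e a ζ μ))
    (hℓs : ∀ μ, ContDiff ℝ (⊤ : ℕ∞) (fun ζ => ℓ ζ μ))
    (hη4s : ∀ α β γ δ, ContDiff ℝ (⊤ : ℕ∞) (fun ζ => η4 ζ α β γ δ))
    (hcomp : ∀ ξ μ ν, ℓ ξ μ * n ξ ν + ∑ a, e a ξ μ * ω a ξ ν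
      = if μ = ν then (1 : ℝ) else 0)
    (halt1 : ∀ ξ α β γ δ, η4 ξ β α γ δ = -η4 ξ α β γ δ)
    (halt2 : ∀ ξ α β γ δ, η4 ξ α γ β δ = -η4 ξ α β γ δ)
    (halt3 : ∀ ξ α β γ δ, η4 ξ α β δ γ = -η4 ξ α β γ δ)
    (hηcov : ∀ ξ a α β γ δ, pd (fun ζ => η4 ζ α β γ δ) a ξ
      = (∑ ρ, (∑ σ, Ch ξ ρ α σ * e a ξ σ) * η4 ξ ρ β γ δ)
        + (∑ ρ, (∑ σ, Ch ξ ρ β σ * e a ξ σ) * η4 ξ α ρ γ δ)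
        + (∑ ρ, (∑ σ, Ch ξ ρ γ σ * e a ξ σ) * η4 ξ α β ρ δ)
        + ∑ ρ, (∑ σ, Ch ξ ρ δ σ * e a ξ σ) * η4 ξ α β γ ρ)
    (a : Fin 3) (ξ : Fin 3 → ℝ) :
    pd (eta123 η4 ℓ e) a ξ
      = (phiF Ch e n ℓ a ξ + ∑ f, Gbar Ch e ω f f a ξ) * eta123 η4 ℓ e ξ := by
  have hF : ∀ α β γ δ, Differentiable ℝ
      (fun ζ => η4 ζ α β γ δ * ℓ ζ α * e 0 ζ β * e 1 ζ γ * e 2 ζ δ) :=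
    fun α β γ δ => (((((hη4s α β γ δ).mul (hℓs α)).mul (he 0 β)).mul (he 1 γ)).mul
      (he 2 δ)).differentiable (by simp)
  have A12 : ∀ α β γ δ, η4 ξ β α γ δ = -η4 ξ α β γ δ := halt1 ξ
  have A23 : ∀ α β γ δ, η4 ξ α γ β δ = -η4 ξ α β γ δ := halt2 ξ
  have A34 : ∀ α β γ δ, η4 ξ α β δ γ = -η4 ξ α β γ δ := halt3 ξ
  have A13 : ∀ α β γ δ, η4 ξ γ β α δ = -η4 ξ α β γ δ := fun α β γ δ => by
    rw [halt1, halt2, halt1]; ring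
  have A14 : ∀ α β γ δ, η4 ξ δ β γ α = -η4 ξ α β γ δ := fun α β γ δ => by
    rw [halt1, halt2, halt3, halt2, halt1]; ring
  have A24 : ∀ α β γ δ, η4 ξ α δ γ β = -η4 ξ α β γ δ := fun α β γ δ => by
    rw [halt2, halt3, halt2]; ring
  have hpd1 : pd (eta123 η4 ℓ e) a ξ = S4 (fun α β γ δ =>
      pd (fun ζ => η4 ζ α β γ δ * ℓ ζ α * e 0 ζ β * e 1 ζ γ * e 2 ζ δ) a ξ) :=
    pd_sum4 (fun α β γ δ ζ => η4 ζ α β γ δ * ℓ ζ α * e 0 ζ β * e 1 ζ γ * e 2 ζ δ) hF a ξ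
  have hpd3 : pd (eta123 η4 ℓ e) a ξ = S4 (fun α β γ δ =>
        pd (fun ζ => η4 ζ α β γ δ) a ξ * ℓ ξ α * e 0 ξ β * e 1 ξ γ * e 2 ξ δ
      + η4 ξ α β γ δ * pd (fun ζ => ℓ ζ α) a ξ * e 0 ξ β * e 1 ξ γ * e 2 ξ δ
      + η4 ξ α β γ δ * ℓ ξ α * pd (fun ζ => e 0 ζ β) a ξ * e 1 ξ γ * e 2 ξ δ
      + η4 ξ α β γ δ * ℓ ξ α * e 0 ξ β * pd (fun ζ => e 1 ζ γ) a ξ * e 2 ξ δ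
      + η4 ξ α β γ δ * ℓ ξ α * e 0 ξ β * e 1 ξ γ * pd (fun ζ => e 2 ζ δ) a ξ) := by
    rw [hpd1]
    exact sum4_congr _ _ fun α β γ δ => pd_mul5 _ _ _ _ _
      ((hη4s α β γ δ).differentiable (by simp)).differentiableAt
      ((hℓs α).differentiable (by simp)).differentiableAt
      ((he 0 β).differentiable (by simp)).differentiableAt
      ((he 1 γ).differentiable (by simp)).differentiableAt
      ((he 2 δ).differentiable (by simp)).differentiableAt
  have h8 : S4 (fun α β γ δ =>
        pd (fun ζ => η4 ζ α β γ δ) a ξ * ℓ ξ α * e 0 ξ β * e 1 ξ γ * e 2 ξ δ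
      + η4 ξ α β γ δ * pd (fun ζ => ℓ ζ α) a ξ * e 0 ξ β * e 1 ξ γ * e 2 ξ δ
      + η4 ξ α β γ δ * ℓ ξ α * pd (fun ζ => e 0 ζ β) a ξ * e 1 ξ γ * e 2 ξ δ
      + η4 ξ α β γ δ * ℓ ξ α * e 0 ξ β * pd (fun ζ => e 1 ζ γ) a ξ * e 2 ξ δ
      + η4 ξ α β γ δ * ℓ ξ α * e 0 ξ β * e 1 ξ γ * pd (fun ζ => e 2 ζ δ) a ξ)
      = S4 (fun α β γ δ => (∑ ρ, (∑ σ, Ch ξ ρ α σ * e a ξ σ) * η4 ξ ρ β γ δ) * ℓ ξ α * e 0 ξ β * e 1 ξ γ * e 2 ξ δ)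
      + (S4 (fun α β γ δ => (∑ ρ, (∑ σ, Ch ξ ρ β σ * e a ξ σ) * η4 ξ α ρ γ δ) * ℓ ξ α * e 0 ξ β * e 1 ξ γ * e 2 ξ δ)
      + (S4 (fun α β γ δ => (∑ ρ, (∑ σ, Ch ξ ρ γ σ * e a ξ σ) * η4 ξ α β ρ δ) * ℓ ξ α * e 0 ξ β * e 1 ξ γ * e 2 ξ δ)
      + (S4 (fun α β γ δ => (∑ ρ, (∑ σ, Ch ξ ρ δ σ * e a ξ σ) * η4 ξ α β γ ρ) * ℓ ξ α * e 0 ξ β * e 1 ξ γ * e 2 ξ δ)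
      + (S4 (fun α β γ δ => η4 ξ α β γ δ * pd (fun ζ => ℓ ζ α) a ξ * e 0 ξ β * e 1 ξ γ * e 2 ξ δ)
      + (S4 (fun α β γ δ => η4 ξ α β γ δ * ℓ ξ α * pd (fun ζ => e 0 ζ β) a ξ * e 1 ξ γ * e 2 ξ δ)
      + (S4 (fun α β γ δ => η4 ξ α β γ δ * ℓ ξ α * e 0 ξ β * pd (fun ζ => e 1 ζ γ) a ξ * e 2 ξ δ)
      + S4 (fun α β γ δ => η4 ξ α β γ δ * ℓ ξ α * e 0 ξ β * e 1 ξ γ * pd (fun ζ => e 2 ζ δ) a ξ))))))) := by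
    calc S4 (fun α β γ δ =>
        pd (fun ζ => η4 ζ α β γ δ) a ξ * ℓ ξ α * e 0 ξ β * e 1 ξ γ * e 2 ξ δ
      + η4 ξ α β γ δ * pd (fun ζ => ℓ ζ α) a ξ * e 0 ξ β * e 1 ξ γ * e 2 ξ δ
      + η4 ξ α β γ δ * ℓ ξ α * pd (fun ζ => e 0 ζ β) a ξ * e 1 ξ γ * e 2 ξ δ
      + η4 ξ α β γ δ * ℓ ξ α * e 0 ξ β * pd (fun ζ => e 1 ζ γ) a ξ * e 2 ξ δ
      + η4 ξ α β γ δ * ℓ ξ α * e 0 ξ β * e 1 ξ γ * pd (fun ζ => e 2 ζ δ) a ξ)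
        = S4 (fun α β γ δ =>
          (∑ ρ, (∑ σ, Ch ξ ρ α σ * e a ξ σ) * η4 ξ ρ β γ δ) * ℓ ξ α * e 0 ξ β * e 1 ξ γ * e 2 ξ δ
        + ((∑ ρ, (∑ σ, Ch ξ ρ β σ * e a ξ σ) * η4 ξ α ρ γ δ) * ℓ ξ α * e 0 ξ β * e 1 ξ γ * e 2 ξ δ
        + ((∑ ρ, (∑ σ, Ch ξ ρ γ σ * e a ξ σ) * η4 ξ α β ρ δ) * ℓ ξ α * e 0 ξ β * e 1 ξ γ * e 2 ξ δ
        + ((∑ ρ, (∑ σ, Ch ξ ρ δ σ * e a ξ σ) * η4 ξ α β γ ρ) * ℓ ξ α * e 0 ξ β * e 1 ξ γ * e 2 ξ δ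
        + (η4 ξ α β γ δ * pd (fun ζ => ℓ ζ α) a ξ * e 0 ξ β * e 1 ξ γ * e 2 ξ δ
        + (η4 ξ α β γ δ * ℓ ξ α * pd (fun ζ => e 0 ζ β) a ξ * e 1 ξ γ * e 2 ξ δ
        + (η4 ξ α β γ δ * ℓ ξ α * e 0 ξ β * pd (fun ζ => e 1 ζ γ) a ξ * e 2 ξ δ
        + η4 ξ α β γ δ * ℓ ξ α * e 0 ξ β * e 1 ξ γ * pd (fun ζ => e 2 ζ δ) a ξ))))))) :=
        sum4_congr _ _ fun α β γ δ => by rw [hηcov ξ a α β γ δ]; ring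
      _ = _ := by
        rw [sum4_add, sum4_add, sum4_add, sum4_add, sum4_add, sum4_add, sum4_add]
  have t1 : S4 (fun α β γ δ => (∑ ρ, (∑ σ, Ch ξ ρ α σ * e a ξ σ) * η4 ξ ρ β γ δ) * ℓ ξ α * e 0 ξ β * e 1 ξ γ * e 2 ξ δ)
      = QQ (η4 ξ) (fun μ => ∑ ρ, (∑ σ, Ch ξ μ ρ σ * e a ξ σ) * ℓ ξ ρ) (e 0 ξ) (e 1 ξ) (e 2 ξ) :=
    transfer1 (η4 ξ) (fun ρ μ => ∑ σ, Ch ξ ρ μ σ * e a ξ σ) (ℓ ξ) (e 0 ξ) (e 1 ξ) (e 2 ξ)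
  have t2 : S4 (fun α β γ δ => (∑ ρ, (∑ σ, Ch ξ ρ β σ * e a ξ σ) * η4 ξ α ρ γ δ) * ℓ ξ α * e 0 ξ β * e 1 ξ γ * e 2 ξ δ)
      = QQ (η4 ξ) (ℓ ξ) (fun μ => ∑ ρ, (∑ σ, Ch ξ μ ρ σ * e a ξ σ) * e 0 ξ ρ) (e 1 ξ) (e 2 ξ) :=
    transfer2 (η4 ξ) (fun ρ μ => ∑ σ, Ch ξ ρ μ σ * e a ξ σ) (ℓ ξ) (e 0 ξ) (e 1 ξ) (e 2 ξ)
  have t3 : S4 (fun α β γ δ => (∑ ρ, (∑ σ, Ch ξ ρ γ σ * e a ξ σ) * η4 ξ α β ρ δ) * ℓ ξ α * e 0 ξ β * e 1 ξ γ * e 2 ξ δ)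
      = QQ (η4 ξ) (ℓ ξ) (e 0 ξ) (fun μ => ∑ ρ, (∑ σ, Ch ξ μ ρ σ * e a ξ σ) * e 1 ξ ρ) (e 2 ξ) :=
    transfer3 (η4 ξ) (fun ρ μ => ∑ σ, Ch ξ ρ μ σ * e a ξ σ) (ℓ ξ) (e 0 ξ) (e 1 ξ) (e 2 ξ)
  have t4 : S4 (fun α β γ δ => (∑ ρ, (∑ σ, Ch ξ ρ δ σ * e a ξ σ) * η4 ξ α β γ ρ) * ℓ ξ α * e 0 ξ β * e 1 ξ γ * e 2 ξ δ)
      = QQ (η4 ξ) (ℓ ξ) (e 0 ξ) (e 1 ξ) (fun μ => ∑ ρ, (∑ σ, Ch ξ μ ρ σ * e a ξ σ) * e 2 ξ ρ) :=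
    transfer4 (η4 ξ) (fun ρ μ => ∑ σ, Ch ξ ρ μ σ * e a ξ σ) (ℓ ξ) (e 0 ξ) (e 1 ξ) (e 2 ξ)
  have r1 : S4 (fun α β γ δ => η4 ξ α β γ δ * pd (fun ζ => ℓ ζ α) a ξ * e 0 ξ β * e 1 ξ γ * e 2 ξ δ)
      = QQ (η4 ξ) (fun μ => pd (fun ζ => ℓ ζ μ) a ξ) (e 0 ξ) (e 1 ξ) (e 2 ξ) := rfl
  have r2 : S4 (fun α β γ δ => η4 ξ α β γ δ * ℓ ξ α * pd (fun ζ => e 0 ζ β) a ξ * e 1 ξ γ * e 2 ξ δ)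
      = QQ (η4 ξ) (ℓ ξ) (fun μ => pd (fun ζ => e 0 ζ μ) a ξ) (e 1 ξ) (e 2 ξ) := rfl
  have r3 : S4 (fun α β γ δ => η4 ξ α β γ δ * ℓ ξ α * e 0 ξ β * pd (fun ζ => e 1 ζ γ) a ξ * e 2 ξ δ)
      = QQ (η4 ξ) (ℓ ξ) (e 0 ξ) (fun μ => pd (fun ζ => e 1 ζ μ) a ξ) (e 2 ξ) := rfl
  have r4 : S4 (fun α β γ δ => η4 ξ α β γ δ * ℓ ξ α * e 0 ξ β * e 1 ξ γ * pd (fun ζ => e 2 ζ δ) a ξ)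
      = QQ (η4 ξ) (ℓ ξ) (e 0 ξ) (e 1 ξ) (fun μ => pd (fun ζ => e 2 ζ μ) a ξ) := rfl
  have hfe1 : cov Ch e a ℓ ξ = fun μ => pd (fun ζ => ℓ ζ μ) a ξ
      + ∑ ρ, (∑ σ, Ch ξ μ ρ σ * e a ξ σ) * ℓ ξ ρ :=
    funext fun μ => covM Ch e a ℓ ξ μ (hChsym ξ)
  have hfe2 : cov Ch e a (e 0) ξ = fun μ => pd (fun ζ => e 0 ζ μ) a ξ
      + ∑ ρ, (∑ σ, Ch ξ μ ρ σ * e a ξ σ) * e 0 ξ ρ :=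
    funext fun μ => covM Ch e a (e 0) ξ μ (hChsym ξ)
  have hfe3 : cov Ch e a (e 1) ξ = fun μ => pd (fun ζ => e 1 ζ μ) a ξ
      + ∑ ρ, (∑ σ, Ch ξ μ ρ σ * e a ξ σ) * e 1 ξ ρ :=
    funext fun μ => covM Ch e a (e 1) ξ μ (hChsym ξ)
  have hfe4 : cov Ch e a (e 2) ξ = fun μ => pd (fun ζ => e 2 ζ μ) a ξ
      + ∑ ρ, (∑ σ, Ch ξ μ ρ σ * e a ξ σ) * e 2 ξ ρ :=
    funext fun μ => covM Ch e a (e 2) ξ μ (hChsym ξ)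
  have c1 : QQ (η4 ξ) (cov Ch e a ℓ ξ) (e 0 ξ) (e 1 ξ) (e 2 ξ)
      = QQ (η4 ξ) (fun μ => pd (fun ζ => ℓ ζ μ) a ξ) (e 0 ξ) (e 1 ξ) (e 2 ξ)
      + QQ (η4 ξ) (fun μ => ∑ ρ, (∑ σ, Ch ξ μ ρ σ * e a ξ σ) * ℓ ξ ρ) (e 0 ξ) (e 1 ξ) (e 2 ξ) := by
    rw [hfe1]; apply Qadd1
  have c2 : QQ (η4 ξ) (ℓ ξ) (cov Ch e a (e 0) ξ) (e 1 ξ) (e 2 ξ)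
      = QQ (η4 ξ) (ℓ ξ) (fun μ => pd (fun ζ => e 0 ζ μ) a ξ) (e 1 ξ) (e 2 ξ)
      + QQ (η4 ξ) (ℓ ξ) (fun μ => ∑ ρ, (∑ σ, Ch ξ μ ρ σ * e a ξ σ) * e 0 ξ ρ) (e 1 ξ) (e 2 ξ) := by
    rw [hfe2]; apply Qadd2
  have c3 : QQ (η4 ξ) (ℓ ξ) (e 0 ξ) (cov Ch e a (e 1) ξ) (e 2 ξ)
      = QQ (η4 ξ) (ℓ ξ) (e 0 ξ) (fun μ => pd (fun ζ => e 1 ζ μ) a ξ) (e 2 ξ)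
      + QQ (η4 ξ) (ℓ ξ) (e 0 ξ) (fun μ => ∑ ρ, (∑ σ, Ch ξ μ ρ σ * e a ξ σ) * e 1 ξ ρ) (e 2 ξ) := by
    rw [hfe3]; apply Qadd3
  have c4 : QQ (η4 ξ) (ℓ ξ) (e 0 ξ) (e 1 ξ) (cov Ch e a (e 2) ξ)
      = QQ (η4 ξ) (ℓ ξ) (e 0 ξ) (e 1 ξ) (fun μ => pd (fun ζ => e 2 ζ μ) a ξ)
      + QQ (η4 ξ) (ℓ ξ) (e 0 ξ) (e 1 ξ) (fun μ => ∑ ρ, (∑ σ, Ch ξ μ ρ σ * e a ξ σ) * e 2 ξ ρ) := by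
    rw [hfe4]; apply Qadd4
  have hd1 : cov Ch e a ℓ ξ = fun μ => (∑ ν, n ξ ν * cov Ch e a ℓ ξ ν) * ℓ ξ μ
      + (∑ ν, ω 0 ξ ν * cov Ch e a ℓ ξ ν) * e 0 ξ μ
      + (∑ ν, ω 1 ξ ν * cov Ch e a ℓ ξ ν) * e 1 ξ μ
      + (∑ ν, ω 2 ξ ν * cov Ch e a ℓ ξ ν) * e 2 ξ μ :=
    complete4 ℓ n e ω ξ (hcomp ξ) (cov Ch e a ℓ ξ)
  have hd2 : cov Ch e a (e 0) ξ = fun μ => (∑ ν, n ξ ν * cov Ch e a (e 0) ξ ν) * ℓ ξ μ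
      + (∑ ν, ω 0 ξ ν * cov Ch e a (e 0) ξ ν) * e 0 ξ μ
      + (∑ ν, ω 1 ξ ν * cov Ch e a (e 0) ξ ν) * e 1 ξ μ
      + (∑ ν, ω 2 ξ ν * cov Ch e a (e 0) ξ ν) * e 2 ξ μ :=
    complete4 ℓ n e ω ξ (hcomp ξ) (cov Ch e a (e 0) ξ)
  have hd3 : cov Ch e a (e 1) ξ = fun μ => (∑ ν, n ξ ν * cov Ch e a (e 1) ξ ν) * ℓ ξ μ
      + (∑ ν, ω 0 ξ ν * cov Ch e a (e 1) ξ ν) * e 0 ξ μ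
      + (∑ ν, ω 1 ξ ν * cov Ch e a (e 1) ξ ν) * e 1 ξ μ
      + (∑ ν, ω 2 ξ ν * cov Ch e a (e 1) ξ ν) * e 2 ξ μ :=
    complete4 ℓ n e ω ξ (hcomp ξ) (cov Ch e a (e 1) ξ)
  have hd4 : cov Ch e a (e 2) ξ = fun μ => (∑ ν, n ξ ν * cov Ch e a (e 2) ξ ν) * ℓ ξ μ
      + (∑ ν, ω 0 ξ ν * cov Ch e a (e 2) ξ ν) * e 0 ξ μ
      + (∑ ν, ω 1 ξ ν * cov Ch e a (e 2) ξ ν) * e 1 ξ μ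
      + (∑ ν, ω 2 ξ ν * cov Ch e a (e 2) ξ ν) * e 2 ξ μ :=
    complete4 ℓ n e ω ξ (hcomp ξ) (cov Ch e a (e 2) ξ)
  have d1 : QQ (η4 ξ) (cov Ch e a ℓ ξ) (e 0 ξ) (e 1 ξ) (e 2 ξ)
      = phiF Ch e n ℓ a ξ * eta123 η4 ℓ e ξ := by
    rw [hd1, Qlin1]
    rw [Qalt12 (η4 ξ) A12 (e 0 ξ) (e 1 ξ) (e 2 ξ),
        Qalt13 (η4 ξ) A13 (e 1 ξ) (e 0 ξ) (e 2 ξ),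
        Qalt14 (η4 ξ) A14 (e 2 ξ) (e 0 ξ) (e 1 ξ)]
    simp only [mul_zero, add_zero]
    rfl
  have d2 : QQ (η4 ξ) (ℓ ξ) (cov Ch e a (e 0) ξ) (e 1 ξ) (e 2 ξ)
      = Gbar Ch e ω 0 0 a ξ * eta123 η4 ℓ e ξ := by
    rw [hd2, Qlin2]
    rw [Qalt12 (η4 ξ) A12 (ℓ ξ) (e 1 ξ) (e 2 ξ),
        Qalt23 (η4 ξ) A23 (e 1 ξ) (ℓ ξ) (e 2 ξ),
        Qalt24 (η4 ξ) A24 (e 2 ξ) (ℓ ξ) (e 1 ξ)]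
    simp only [mul_zero, add_zero, zero_add]
    rfl
  have d3 : QQ (η4 ξ) (ℓ ξ) (e 0 ξ) (cov Ch e a (e 1) ξ) (e 2 ξ)
      = Gbar Ch e ω 1 1 a ξ * eta123 η4 ℓ e ξ := by
    rw [hd3, Qlin3]
    rw [Qalt13 (η4 ξ) A13 (ℓ ξ) (e 0 ξ) (e 2 ξ),
        Qalt23 (η4 ξ) A23 (e 0 ξ) (ℓ ξ) (e 2 ξ),
        Qalt34 (η4 ξ) A34 (e 2 ξ) (ℓ ξ) (e 0 ξ)]
    simp only [mul_zero, add_zero, zero_add]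
    rfl
  have d4 : QQ (η4 ξ) (ℓ ξ) (e 0 ξ) (e 1 ξ) (cov Ch e a (e 2) ξ)
      = Gbar Ch e ω 2 2 a ξ * eta123 η4 ℓ e ξ := by
    rw [hd4, Qlin4]
    rw [Qalt14 (η4 ξ) A14 (ℓ ξ) (e 0 ξ) (e 1 ξ),
        Qalt24 (η4 ξ) A24 (e 0 ξ) (ℓ ξ) (e 1 ξ),
        Qalt34 (η4 ξ) A34 (e 1 ξ) (ℓ ξ) (e 0 ξ)]
    simp only [mul_zero, add_zero, zero_add]
    rfl
  have final : pd (eta123 η4 ℓ e) a ξ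
      = phiF Ch e n ℓ a ξ * eta123 η4 ℓ e ξ
      + Gbar Ch e ω 0 0 a ξ * eta123 η4 ℓ e ξ
      + Gbar Ch e ω 1 1 a ξ * eta123 η4 ℓ e ξ
      + Gbar Ch e ω 2 2 a ξ * eta123 η4 ℓ e ξ := by
    linarith [hpd3, h8, t1, t2, t3, t4, r1, r2, r3, r4, c1, c2, c3, c4, d1, d2, d3, d4]
  rw [Fin.sum_univ_three, final]
  ring


lemma eps_identity (G : Fin 3 → Fin 3 → ℝ) (b c d : Fin 3) :
    (∑ f, G f f) * eps b c d = (∑ f, G f b * eps f c d)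
      + (∑ f, G f c * eps b f d) + ∑ f, G f d * eps b c f := by
  fin_cases b <;> fin_cases c <;> fin_cases d <;>
    simp [eps, Fin.sum_univ_three] <;> ring

/-- For a rigged hypersurface in an oriented pseudo-Riemannian
4-manifold with (covariantly constant, alternating, nonvanishing) volume form
`η4`, the induced volume form `η_{bcd} = η₁₂₃ ε_{bcd}` on Σ satisfies
`∇̄_a η_{bcd} = φ_a η_{bcd}`; consequently the rigged connection preserves the
induced volume form if and only if `φ = 0`. -/
theorem stmt11
    (Ch : (Fin 3 → ℝ) → Fin 4 → Fin 4 → Fin 4 → ℝ)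
    (e : Fin 3 → (Fin 3 → ℝ) → Fin 4 → ℝ)
    (ℓ n : (Fin 3 → ℝ) → Fin 4 → ℝ)
    (ω : Fin 3 → (Fin 3 → ℝ) → Fin 4 → ℝ)
    (η4 : (Fin 3 → ℝ) → Fin 4 → Fin 4 → Fin 4 → Fin 4 → ℝ)
    (hChsym : ∀ ξ α β γ, Ch ξ α β γ = Ch ξ α γ β)
    (hesym : ∀ ξ a b μ, pd (fun ζ => e b ζ μ) a ξ = pd (fun ζ => e a ζ μ) b ξ)
    (he : ∀ a μ, ContDiff ℝ (⊤ : ℕ∞) (fun ζ => e a ζ μ))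
    (hℓs : ∀ μ, ContDiff ℝ (⊤ : ℕ∞) (fun ζ => ℓ ζ μ))
    (hη4s : ∀ α β γ δ, ContDiff ℝ (⊤ : ℕ∞) (fun ζ => η4 ζ α β γ δ))
    (hne : ∀ ξ a, ∑ μ, n ξ μ * e a ξ μ = 0)
    (hnl : ∀ ξ, ∑ μ, n ξ μ * ℓ ξ μ = 1)
    (hωl : ∀ ξ a, ∑ μ, ω a ξ μ * ℓ ξ μ = 0)
    (hωe : ∀ ξ a b, ∑ μ, ω a ξ μ * e b ξ μ = if a = b then (1 : ℝ) else 0)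
    (hcomp : ∀ ξ μ ν, ℓ ξ μ * n ξ ν + ∑ a, e a ξ μ * ω a ξ ν
      = if μ = ν then (1 : ℝ) else 0)
    (halt1 : ∀ ξ α β γ δ, η4 ξ β α γ δ = -η4 ξ α β γ δ)
    (halt2 : ∀ ξ α β γ δ, η4 ξ α γ β δ = -η4 ξ α β γ δ)
    (halt3 : ∀ ξ α β γ δ, η4 ξ α β δ γ = -η4 ξ α β γ δ)
    (hηcov : ∀ ξ a α β γ δ, pd (fun ζ => η4 ζ α β γ δ) a ξ
      = (∑ ρ, (∑ σ, Ch ξ ρ α σ * e a ξ σ) * η4 ξ ρ β γ δ)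
        + (∑ ρ, (∑ σ, Ch ξ ρ β σ * e a ξ σ) * η4 ξ α ρ γ δ)
        + (∑ ρ, (∑ σ, Ch ξ ρ γ σ * e a ξ σ) * η4 ξ α β ρ δ)
        + ∑ ρ, (∑ σ, Ch ξ ρ δ σ * e a ξ σ) * η4 ξ α β γ ρ)
    (hη0 : ∀ ξ, eta123 η4 ℓ e ξ ≠ 0) :
    (∀ ξ (a b c d : Fin 3),
        DbarT3 (fun ζ x y z => Gbar Ch e ω x y z ζ)
            (fun ζ x y z => eta123 η4 ℓ e ζ * eps x y z) a b c d ξ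
          = phiF Ch e n ℓ a ξ * (eta123 η4 ℓ e ξ * eps b c d))
    ∧ ((∀ ξ (a b c d : Fin 3),
        DbarT3 (fun ζ x y z => Gbar Ch e ω x y z ζ)
            (fun ζ x y z => eta123 η4 ℓ e ζ * eps x y z) a b c d ξ = 0)
      ↔ (∀ ξ a, phiF Ch e n ℓ a ξ = 0)) := by
  have part1 : ∀ ξ (a b c d : Fin 3),
      DbarT3 (fun ζ x y z => Gbar Ch e ω x y z ζ)
          (fun ζ x y z => eta123 η4 ℓ e ζ * eps x y z) a b c d ξ
        = phiF Ch e n ℓ a ξ * (eta123 η4 ℓ e ξ * eps b c d) := by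
    intro ξ a b c d
    have hEd : Differentiable ℝ (eta123 η4 ℓ e) := by
      unfold eta123
      exact Differentiable.fun_sum fun α _ => Differentiable.fun_sum fun β _ =>
        Differentiable.fun_sum fun γ _ => Differentiable.fun_sum fun δ _ =>
        (((((hη4s α β γ δ).mul (hℓs α)).mul (he 0 β)).mul (he 1 γ)).mul
          (he 2 δ)).differentiable (by simp)
    have hkey := etaKey Ch e ℓ n ω η4 hChsym he hℓs hη4s hcomp halt1 halt2 halt3 hηcov a ξ
    have hpdc : pd (fun ζ => eta123 η4 ℓ e ζ * eps b c d) a ξ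
        = pd (eta123 η4 ℓ e) a ξ * eps b c d := pd_mul_const hEd.differentiableAt
    have m1 : (∑ f, Gbar Ch e ω f b a ξ * (eta123 η4 ℓ e ξ * eps f c d))
        = eta123 η4 ℓ e ξ * ∑ f, Gbar Ch e ω f b a ξ * eps f c d := by
      rw [Finset.mul_sum]; exact Finset.sum_congr rfl fun f _ => by ring
    have m2 : (∑ f, Gbar Ch e ω f c a ξ * (eta123 η4 ℓ e ξ * eps b f d))
        = eta123 η4 ℓ e ξ * ∑ f, Gbar Ch e ω f c a ξ * eps b f d := by
      rw [Finset.mul_sum]; exact Finset.sum_congr rfl fun f _ => by ring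
    have m3 : (∑ f, Gbar Ch e ω f d a ξ * (eta123 η4 ℓ e ξ * eps b c f))
        = eta123 η4 ℓ e ξ * ∑ f, Gbar Ch e ω f d a ξ * eps b c f := by
      rw [Finset.mul_sum]; exact Finset.sum_congr rfl fun f _ => by ring
    have hid : (∑ f, Gbar Ch e ω f f a ξ) * eps b c d
        = (∑ f, Gbar Ch e ω f b a ξ * eps f c d) + (∑ f, Gbar Ch e ω f c a ξ * eps b f d)
          + ∑ f, Gbar Ch e ω f d a ξ * eps b c f :=
      eps_identity (fun f x => Gbar Ch e ω f x a ξ) b c d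
    show pd (fun ζ => eta123 η4 ℓ e ζ * eps b c d) a ξ
        - (∑ f, Gbar Ch e ω f b a ξ * (eta123 η4 ℓ e ξ * eps f c d))
        - (∑ f, Gbar Ch e ω f c a ξ * (eta123 η4 ℓ e ξ * eps b f d))
        - (∑ f, Gbar Ch e ω f d a ξ * (eta123 η4 ℓ e ξ * eps b c f))
        = phiF Ch e n ℓ a ξ * (eta123 η4 ℓ e ξ * eps b c d)
    rw [hpdc, hkey, m1, m2, m3]
    linear_combination eta123 η4 ℓ e ξ * hid
  refine ⟨part1, ⟨fun h ξ a => ?_, fun h ξ a b c d => by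
    rw [part1 ξ a b c d, h ξ a, zero_mul]⟩⟩
  have h0 := h ξ a 0 1 2
  rw [part1 ξ a 0 1 2] at h0
  have heps : eps 0 1 2 = 1 := by norm_num [eps]
  rw [heps, mul_one] at h0
  rcases mul_eq_zero.1 h0 with h1 | h2
  · exact h1
  · exact absurd h2 (hη0 ξ)


end
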